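/- For every integer k ≥ 1 and every positive integer n, S_k(n) = n^(k+1)/(k+1) + n^k/2 − (1/(k+1)) · Σ_{j=1}^{⌊k/2⌋} Σ_{m=1}^{j} (-1)^m · (m! · (m-1)! / (2m+1)!) · C(k+1, 2j) · R(j,m) · n^(k+1-2j), as an identity of rational numbers. -/

import Mathlib

/-
Expanding `x ^ (2j)` in the central factorial powers `x^[2m] = x²(x² - 1²)⋯(x² - (m-1)²)`,
whose coefficients are the central factorial numbers `T(2j, 2m)`, and summing each `x^[2m]` over
`x = 1, …, n` with an explicit antidifference, writes `S_{2j}(n)` as a polynomial in `n`.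
Its linear coefficient is the Bernoulli number `B_{2j}` by Faulhaber's formula, which gives
`B_{2j} = ∑ₘ (-1)^(m-1) m! (m-1)! / (2m+1)! · (2m)! T(2j, 2m) / 2`.
Finally `(2m)! T(2j, 2m)` is the central difference `δ^(2m) x^(2j)` at `0`, which is `2 R(j, m)`
by the symmetry `i ↦ 2m - i` of its terms. Substituting into Faulhaber's formula for `S_k(n)`,
where the odd Bernoulli numbers beyond `B_1` vanish, gives the theorem.
-/

/-- `S k n = 1^k + 2^k + ⋯ + n^k`, the sum of the `k`-th powers of the first `n`
positive integers. -/
def S (k n : ℕ) : ℕ := ∑ i ∈ Finset.Icc 1 n, i ^ k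

/-- `R j m = ∑_{i=0}^m (-1)^i C(2m, i) (m-i)^{2j}`, the sequence A304330. -/
def R (j m : ℕ) : ℤ :=
  ∑ i ∈ Finset.range (m + 1),
    (-1 : ℤ) ^ i * ((2 * m).choose i : ℤ) * (((m - i) ^ (2 * j) : ℕ) : ℤ)

open Finset Polynomial

/-- `centralFactorialT j m` is the central factorial number `T(2j, 2m)`. -/
def centralFactorialT : ℕ → ℕ → ℕ
  | 0, 0 => 1
  | 0, _ + 1 => 0
  | _ + 1, 0 => 0
  | j + 1, m + 1 => centralFactorialT j m + (m + 1) ^ 2 * centralFactorialT j (m + 1)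

theorem centralFactorialT_eq_zero_of_lt : ∀ {j m : ℕ}, j < m → centralFactorialT j m = 0
  | 0, _ + 1, _ => rfl
  | j + 1, m + 1, h => by
    rw [centralFactorialT, centralFactorialT_eq_zero_of_lt (by omega : j < m),
      centralFactorialT_eq_zero_of_lt (by omega : j < m + 1), mul_zero, add_zero]

section CommRing

variable {A : Type*} [CommRing A]

def centralFactorialPow (m : ℕ) (x : A) : A := ∏ s ∈ range m, (x ^ 2 - (s : A) ^ 2)

theorem centralFactorialPow_succ (m : ℕ) (x : A) :
    centralFactorialPow (m + 1) x = centralFactorialPow m x * (x ^ 2 - (m : A) ^ 2) :=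
  prod_range_succ _ _

theorem pow_two_mul_eq_sum_centralFactorialPow (j : ℕ) (x : A) :
    x ^ (2 * j) =
      ∑ m ∈ range (j + 1), (centralFactorialT j m : A) * centralFactorialPow m x := by
  induction j with
  | zero => simp [centralFactorialT, centralFactorialPow]
  | succ j ih =>
    set T := fun m => (centralFactorialT j m : A)
    set c := fun m => centralFactorialPow m x
    have hshift : ∑ m ∈ range (j + 1), (m : A) ^ 2 * T m * c m
        = ∑ m ∈ range (j + 1), ((m : A) + 1) ^ 2 * T (m + 1) * c (m + 1) := by
      have e := (sum_range_succ (fun m => (m : A) ^ 2 * T m * c m) (j + 1)).symm.trans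
        (sum_range_succ' _ (j + 1))
      simpa [T, centralFactorialT_eq_zero_of_lt (Nat.lt_succ_self j)] using e
    calc x ^ (2 * (j + 1)) = ∑ m ∈ range (j + 1), T m * (x ^ 2 * c m) := by
          rw [mul_add_one, pow_add, ih, sum_mul]; exact sum_congr rfl fun _ _ => by ring
      _ = ∑ m ∈ range (j + 1), (T m * c (m + 1) + (m : A) ^ 2 * T m * c m) := by
          refine sum_congr rfl fun m _ => ?_
          simp only [c, centralFactorialPow_succ]; ring
      _ = ∑ m ∈ range (j + 1 + 1), (centralFactorialT (j + 1) m : A) * c m := by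
          rw [sum_add_distrib, hshift, ← sum_add_distrib, sum_range_succ' _ (j + 1)]
          simp only [centralFactorialT, T]
          push_cast
          simp only [zero_mul, add_zero]
          exact sum_congr rfl fun _ _ => by ring

def oddCentralFactorialPow (t : ℕ) (x : A) : A :=
  x * ∏ s ∈ range t, (x ^ 2 - ((s : A) + 1) ^ 2)

/-- `(x - t)(x - t + 1)⋯(x + t + 1)` -/
def consecutiveProd (t : ℕ) (x : A) : A := ∏ s ∈ range (t + 1), (x + (s + 1)) * (x - s)

theorem oddCentralFactorialPow_succ (t : ℕ) (x : A) :
    oddCentralFactorialPow (t + 1) x =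
      oddCentralFactorialPow t x * (x ^ 2 - ((t : A) + 1) ^ 2) := by
  rw [oddCentralFactorialPow, oddCentralFactorialPow, prod_range_succ, mul_assoc]

theorem centralFactorialPow_succ_eq_mul (t : ℕ) (x : A) :
    centralFactorialPow (t + 1) x = x * oddCentralFactorialPow t x := by
  rw [centralFactorialPow, oddCentralFactorialPow, prod_range_succ']
  push_cast
  ring

theorem consecutiveProd_eq_mul_oddCentralFactorialPow (t : ℕ) (x : A) :
    consecutiveProd t x = (x + t + 1) * oddCentralFactorialPow t x := by
  induction t with
  | zero => simp [consecutiveProd, oddCentralFactorialPow]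
  | succ t ih =>
    rw [consecutiveProd, prod_range_succ, ← consecutiveProd, ih, oddCentralFactorialPow_succ]
    push_cast
    ring

theorem consecutiveProd_eq_mul_oddCentralFactorialPow_add_one (t : ℕ) (x : A) :
    consecutiveProd t x = (x - t) * oddCentralFactorialPow t (x + 1) := by
  induction t with
  | zero => simp [consecutiveProd, oddCentralFactorialPow]; ring
  | succ t ih =>
    rw [consecutiveProd, prod_range_succ, ← consecutiveProd, ih, oddCentralFactorialPow_succ]
    push_cast
    ring

end CommRing

theorem add_two_choose_add_one_mul (n i : ℕ) :
    (n + 2).choose (i + 1) * ((i + 1) * (n + 1 - i)) = (n + 2) * (n + 1) * n.choose i := by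
  rw [← mul_assoc, ← Nat.add_one_mul_choose_eq, mul_assoc, ← Nat.choose_mul_succ_eq]
  ring

/-- `δ^(2m) x^(2j)` at `x = 0`, for the central difference `δ f(x) = f(x + 1/2) - f(x - 1/2)`. -/
def centralDifference (j m : ℕ) : ℤ :=
  ∑ i ∈ range (2 * m + 1), (-1) ^ i * ((2 * m).choose i : ℤ) * ((m : ℤ) - i) ^ (2 * j)

theorem centralDifference_zero_left (m : ℕ) : centralDifference 0 m = if m = 0 then 1 else 0 := by
  simp only [centralDifference, mul_zero, pow_zero, mul_one]
  rw [Int.alternating_sum_range_choose]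
  simp

theorem centralDifference_succ_zero (j : ℕ) : centralDifference (j + 1) 0 = 0 := by
  simp [centralDifference]

theorem centralDifference_succ_succ (j m : ℕ) :
    centralDifference (j + 1) (m + 1) =
      ((m : ℤ) + 1) ^ 2 * centralDifference j (m + 1) +
        (2 * m + 2) * (2 * m + 1) * centralDifference j m := by
  set f : ℕ → ℤ := fun i => (-1) ^ i * ((2 * m).choose i : ℤ) * ((m : ℤ) - i) ^ (2 * j)
  have hterm : ∀ i ∈ range (2 * m + 2),
      (-1 : ℤ) ^ (i + 1) * ((2 * m + 2).choose (i + 1) : ℤ) * ((m : ℤ) - i) ^ (2 * j) *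
        (((m : ℤ) - i) ^ 2 - ((m : ℤ) + 1) ^ 2) = (2 * m + 2) * (2 * m + 1) * f i := by
    intro i hi
    have h := congrArg (Nat.cast : ℕ → ℤ) (add_two_choose_add_one_mul (2 * m) i)
    push_cast [Nat.cast_sub (by simp at hi; omega : i ≤ 2 * m + 1)] at h
    linear_combination (-1 : ℤ) ^ i * ((m : ℤ) - i) ^ (2 * j) * h
  rw [← sub_eq_iff_eq_add']
  calc centralDifference (j + 1) (m + 1) - ((m : ℤ) + 1) ^ 2 * centralDifference j (m + 1)
      = ∑ i ∈ range (2 * m + 2 + 1), (-1 : ℤ) ^ i * ((2 * m + 2).choose i : ℤ) *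
          ((m : ℤ) + 1 - i) ^ (2 * j) * (((m : ℤ) + 1 - i) ^ 2 - ((m : ℤ) + 1) ^ 2) := by
        rw [centralDifference, centralDifference, mul_sum, ← sum_sub_distrib, Nat.mul_succ 2 m]
        exact sum_congr rfl fun _ _ => by push_cast; ring1
    _ = ∑ i ∈ range (2 * m + 2), (2 * m + 2) * (2 * m + 1) * f i := by
        rw [sum_range_succ']
        simp only [Nat.cast_add, Nat.cast_one, add_sub_add_right_eq_sub]
        simp [sum_congr rfl hterm]
    _ = (2 * m + 2) * (2 * m + 1) * centralDifference j m := by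
        rw [sum_range_succ, centralDifference, mul_sum]
        simp [f]

theorem centralDifference_eq (j m : ℕ) :
    centralDifference j m = ((2 * m).factorial * centralFactorialT j m : ℕ) := by
  induction j generalizing m with
  | zero => cases m <;> simp [centralDifference_zero_left, centralFactorialT]
  | succ j ih =>
    cases m with
    | zero => simp [centralDifference_succ_zero, centralFactorialT]
    | succ m =>
      rw [centralDifference_succ_succ, ih, ih, centralFactorialT, Nat.mul_succ 2 m,
        Nat.factorial_succ, Nat.factorial_succ]
      push_cast
      ring

theorem two_mul_R_eq_centralDifference {j : ℕ} (hj : j ≠ 0) (m : ℕ) :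
    2 * R j m = centralDifference j m := by
  set g : ℕ → ℤ := fun i => (-1) ^ i * ((2 * m).choose i : ℤ) * ((m : ℤ) - i) ^ (2 * j)
  have hR : R j m = ∑ i ∈ range m, g i + g m := by
    rw [R, ← sum_range_succ]
    exact sum_congr rfl fun i hi => by simp [g, Nat.cast_sub (mem_range_succ_iff.mp hi)]
  have hmid : g m = 0 := by simp [g, hj]
  have hreflect : ∀ i ∈ range m, g (m + 1 + i) = g (m - 1 - i) := by
    intro i hi
    have hi : i < m := mem_range.mp hi
    have hsign : (-1 : ℤ) ^ (m + 1 + i) = (-1) ^ (m - 1 - i) := by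
      rw [show m + 1 + i = (m - 1 - i) + 2 * (i + 1) by omega, pow_add, pow_mul]
      norm_num
    have hbase : (m : ℤ) - (m + 1 + i : ℕ) = -((m : ℤ) - (m - 1 - i : ℕ)) := by omega
    simp only [g]
    rw [hsign, hbase, Even.neg_pow (even_two_mul j),
      ← Nat.choose_symm (by omega : m + 1 + i ≤ 2 * m),
      show 2 * m - (m + 1 + i) = m - 1 - i by omega]
  change 2 * R j m = ∑ i ∈ range (2 * m + 1), g i
  rw [show 2 * m + 1 = m + 1 + m by omega, sum_range_add, sum_congr rfl hreflect,
    sum_range_reflect g m, sum_range_succ, hR, hmid]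
  ring

theorem R_eq_factorial_mul_centralFactorialT {j : ℕ} (hj : j ≠ 0) (m : ℕ) :
    (R j m : ℚ) = (2 * m).factorial * centralFactorialT j m / 2 := by
  have h := two_mul_R_eq_centralDifference hj m
  rw [centralDifference_eq] at h
  rw [eq_div_iff two_ne_zero, mul_comm]
  exact_mod_cast h

noncomputable def antidiff (t : ℕ) : ℚ[X] :=
  C (2 * (2 * t + 3) : ℚ)⁻¹ * ((2 * X + 1) * consecutiveProd t X)

theorem eval_consecutiveProd (t : ℕ) (x : ℚ) :
    (consecutiveProd t (X : ℚ[X])).eval x = consecutiveProd t x := by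
  simp [consecutiveProd, eval_prod]

theorem eval_antidiff (t : ℕ) (x : ℚ) :
    (antidiff t).eval x = (2 * x + 1) * consecutiveProd t x / (2 * (2 * t + 3)) := by
  simp only [antidiff, eval_mul, eval_C, eval_add, eval_X, eval_ofNat, eval_one,
    eval_consecutiveProd]
  ring

theorem eval_antidiff_add_one_sub (t : ℕ) (x : ℚ) :
    (antidiff t).eval (x + 1) - (antidiff t).eval x = centralFactorialPow (t + 1) (x + 1) := by
  rw [eval_antidiff, eval_antidiff, consecutiveProd_eq_mul_oddCentralFactorialPow,
    consecutiveProd_eq_mul_oddCentralFactorialPow_add_one, centralFactorialPow_succ_eq_mul]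
  field_simp
  ring

theorem sum_centralFactorialPow_eq_eval_antidiff (t n : ℕ) :
    ∑ i ∈ range n, centralFactorialPow (t + 1) ((i : ℚ) + 1) =
      (antidiff t).eval (n : ℚ) := by
  have h0 : (antidiff t).eval 0 = 0 := by
    simp [eval_antidiff, consecutiveProd, prod_range_succ']
  simpa [h0, eval_antidiff_add_one_sub] using sum_range_sub (fun i => (antidiff t).eval (i : ℚ)) n

theorem coeff_one_antidiff (t : ℕ) :
    (antidiff t).coeff 1 = (-1) ^ t * t.factorial * (t + 1).factorial / (2 * (2 * t + 3)) := by
  have hsplit : (2 * X + 1) * consecutiveProd t (X : ℚ[X]) =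
      X * ((2 * X + 1) * (X + 1) *
        ∏ s ∈ range t, (X + ((s : ℚ[X]) + 1 + 1)) * (X - ((s : ℚ[X]) + 1))) := by
    rw [consecutiveProd, prod_range_succ']
    push_cast
    ring
  have hprod : ∀ t : ℕ, ∏ s ∈ range t, ((s : ℚ) + 1 + 1) * -((s : ℚ) + 1) =
      (-1) ^ t * t.factorial * (t + 1).factorial := by
    intro t
    induction t with
    | zero => simp
    | succ t ih =>
      rw [prod_range_succ, ih, Nat.factorial_succ (t + 1), Nat.factorial_succ t]
      push_cast
      ring
  rw [antidiff, coeff_C_mul, hsplit, coeff_X_mul _ 0, coeff_zero_eq_eval_zero]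
  simp only [eval_mul, eval_add, eval_sub, eval_X, eval_one, eval_ofNat, eval_natCast, eval_prod,
    zero_add, zero_sub, mul_zero, one_mul, hprod]
  ring

theorem coeff_one_eq_bernoulli' {P : ℚ[X]} {p : ℕ}
    (hP : ∀ n : ℕ, P.eval (n : ℚ) = ∑ k ∈ Ico 1 (n + 1), (k : ℚ) ^ p) :
    P.coeff 1 = bernoulli' p := by
  set F : ℚ[X] :=
    ∑ i ∈ range (p + 1), C (bernoulli' i * (p + 1).choose i / (p + 1)) * X ^ (p + 1 - i)
  have hF : P = F := by
    refine eq_of_infinite_eval_eq _ _ (Set.infinite_of_injective_forall_mem Nat.cast_injective ?_)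
    intro n
    simp only [Set.mem_ofPred_eq, hP, sum_Ico_pow, F, eval_finsetSum, eval_mul, eval_C, eval_pow,
      eval_X]
    exact sum_congr rfl fun _ _ => by ring
  rw [hF, finsetSum_coeff, sum_eq_single p]
  · rw [coeff_C_mul, Nat.add_sub_cancel_left, coeff_X_pow_self, Nat.choose_succ_self_right]
    push_cast
    field_simp
  · intro i hi hip
    rw [coeff_C_mul, coeff_X_pow, if_neg (by simp at hi; omega), mul_zero]
  · simp

theorem bernoulli'_two_mul_eq_sum_centralFactorialT {j : ℕ} (hj : j ≠ 0) :
    bernoulli' (2 * j) = ∑ t ∈ range j, (centralFactorialT j (t + 1) : ℚ) *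
      ((-1) ^ t * t.factorial * (t + 1).factorial / (2 * (2 * t + 3))) := by
  obtain ⟨j, rfl⟩ := Nat.exists_eq_succ_of_ne_zero hj
  simp only [← coeff_one_antidiff, ← coeff_C_mul, ← finsetSum_coeff]
  refine (coeff_one_eq_bernoulli' fun n => ?_).symm
  simp only [eval_finsetSum, eval_mul, eval_C, ← sum_centralFactorialPow_eq_eval_antidiff,
    mul_sum]
  rw [sum_comm, sum_Ico_eq_sum_range, add_tsub_cancel_right]
  refine sum_congr rfl fun i _ => ?_
  rw [pow_two_mul_eq_sum_centralFactorialPow, sum_range_succ' _ (j + 1), Nat.cast_add, Nat.cast_one,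
    add_comm (1 : ℚ)]
  simp [centralFactorialT]

theorem bernoulli'_two_mul_eq_neg_sum_R {j : ℕ} (hj : j ≠ 0) :
    bernoulli' (2 * j) = -∑ m ∈ Icc 1 j, (-1 : ℚ) ^ m *
      ((m.factorial : ℚ) * ((m - 1).factorial : ℚ) / ((2 * m + 1).factorial : ℚ)) *
        (R j m : ℚ) := by
  rw [bernoulli'_two_mul_eq_sum_centralFactorialT hj, ← Ico_add_one_right_eq_Icc,
    sum_Ico_eq_sum_range, add_tsub_cancel_right, ← sum_neg_distrib]
  refine sum_congr rfl fun t _ => ?_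
  rw [R_eq_factorial_mul_centralFactorialT hj, add_comm 1 t, add_tsub_cancel_right,
    Nat.factorial_succ (2 * (t + 1)), pow_succ]
  push_cast
  field_simp
  ring

theorem sum_range_succ_eq_of_odd_eq_zero {M : Type*} [AddCommMonoid M] {f : ℕ → M}
    (hf : ∀ j ≠ 0, f (2 * j + 1) = 0) {k : ℕ} (hk : k ≠ 0) :
    ∑ i ∈ range (k + 1), f i = f 0 + f 1 + ∑ j ∈ Icc 1 (k / 2), f (2 * j) := by
  induction k, Nat.one_le_iff_ne_zero.mpr hk using Nat.le_induction with
  | base => simp [sum_range_succ]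
  | succ k hk1 ih =>
    rw [sum_range_succ, ih (by omega)]
    rcases Nat.even_or_odd' k with ⟨J, rfl | rfl⟩
    · rw [hf J (by omega), add_zero, show (2 * J + 1) / 2 = 2 * J / 2 by omega]
    · rw [show (2 * J + 1 + 1) / 2 = (2 * J + 1) / 2 + 1 by omega, sum_Icc_succ_top (by omega),
        show 2 * ((2 * J + 1) / 2 + 1) = 2 * J + 1 + 1 by omega, add_assoc]

theorem stmt_18_general (k n : ℕ) (hk : 1 ≤ k) :
    (S k n : ℚ) =
      (n : ℚ) ^ (k + 1) / (k + 1 : ℚ) + (n : ℚ) ^ k / 2 -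
        (1 / (k + 1 : ℚ)) *
          ∑ j ∈ Finset.Icc 1 (k / 2), ∑ m ∈ Finset.Icc 1 j,
            (-1 : ℚ) ^ m *
              ((Nat.factorial m : ℚ) * (Nat.factorial (m - 1) : ℚ) /
                (Nat.factorial (2 * m + 1) : ℚ)) *
              ((k + 1).choose (2 * j) : ℚ) * (R j m : ℚ) * (n : ℚ) ^ (k + 1 - 2 * j) := by
  have hS : (S k n : ℚ) = ∑ i ∈ Ico 1 (n + 1), (i : ℚ) ^ k := by
    simp [S, ← Ico_add_one_right_eq_Icc]
  rw [hS, sum_Ico_pow, sum_range_succ_eq_of_odd_eq_zero (fun j hj => by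
    rw [bernoulli'_eq_zero_of_odd (odd_two_mul_add_one j) (by omega), zero_mul, zero_mul, zero_div])
    (by omega : k ≠ 0)]
  simp only [bernoulli'_zero, bernoulli'_one, Nat.choose_zero_right, Nat.choose_one_right,
    Nat.sub_zero, Nat.add_sub_cancel, mul_sum, sub_eq_add_neg, ← sum_neg_distrib]
  congr 1
  · push_cast
    field_simp
  · refine sum_congr rfl fun j hj => ?_
    rw [bernoulli'_two_mul_eq_neg_sum_R (by simp at hj; omega), neg_mul, neg_mul, neg_div, sum_mul,
      sum_mul, sum_div, ← sum_neg_distrib]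
    refine sum_congr rfl fun m _ => ?_
    field_simp

theorem stmt_18 (k n : ℕ) (hk : 1 ≤ k) (hn : 1 ≤ n) :
    (S k n : ℚ) =
      (n : ℚ) ^ (k + 1) / (k + 1 : ℚ) + (n : ℚ) ^ k / 2 -
        (1 / (k + 1 : ℚ)) *
          ∑ j ∈ Finset.Icc 1 (k / 2), ∑ m ∈ Finset.Icc 1 j,
            (-1 : ℚ) ^ m *
              ((Nat.factorial m : ℚ) * (Nat.factorial (m - 1) : ℚ) /
                (Nat.factorial (2 * m + 1) : ℚ)) *
              ((k + 1).choose (2 * j) : ℚ) * (R j m : ℚ) * (n : ℚ) ^ (k + 1 - 2 * j) :=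
  stmt_18_general k n hk
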